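/- arXiv:math/9809153 — 4 statements merged into one kernel-verified Lean document; each statement's English description precedes it below -/
import Mathlib

section
/- Let p be an odd prime and P a finite p-group of coexponent f(P) ≥ 1. Then the nilpotency class of P satisfies cl(P) ≤ 2·f(P). -/
universe u

section NT
open Finset

private lemma nt_pow_aux {p : ℕ} (t : ℤ) :
    ∀ i : ℕ, ∃ c : ℤ, (1 + (p:ℤ)*t) ^ i = 1 + i*((p:ℤ)*t) + (p:ℤ)^2*c := by
  intro i
  induction i with
  | zero => exact ⟨0, by simp⟩
  | succ i ih =>
    obtain ⟨c, hc⟩ := ih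
    refine ⟨i*t^2 + c + (p:ℤ)*c*t + c*t*0, ?_⟩
    have : (1 + (p:ℤ)*t) ^ (i+1) = (1 + (p:ℤ)*t) ^ i * (1 + (p:ℤ)*t) := by ring
    rw [this, hc]
    push_cast
    ring

private lemma nt_geom {p : ℕ} (hp : p.Prime) (hodd : Odd p) (t : ℤ) :
    ∃ u : ℤ, (∑ i ∈ Finset.range p, (1 + (p:ℤ)*t) ^ i) = (p:ℤ) * u ∧ ¬ (p:ℤ) ∣ u := by
  obtain ⟨h, hh⟩ : ∃ h : ℕ, p = 2*h + 1 := by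
    obtain ⟨h, hh⟩ := hodd; exact ⟨h, by omega⟩
  choose c hc using nt_pow_aux (p := p) t
  have hsum : (∑ i ∈ Finset.range p, (1 + (p:ℤ)*t) ^ i)
      = p + (∑ i ∈ Finset.range p, (i:ℤ))*((p:ℤ)*t) + (p:ℤ)^2 * (∑ i ∈ Finset.range p, c i) := by
    rw [Finset.sum_congr rfl (fun i _ => hc i)]
    rw [Finset.sum_add_distrib, Finset.sum_add_distrib, ← Finset.sum_mul, Finset.mul_sum]
    simp [Finset.card_range]
  have hid : (∑ i ∈ Finset.range p, (i:ℤ)) = (p:ℤ) * h := by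
    have h2 : (∑ i ∈ Finset.range p, i) * 2 = p * (p-1) := Finset.sum_range_id_mul_two p
    have : ((∑ i ∈ Finset.range p, i) : ℤ) * 2 = (p:ℤ) * h * 2 := by
      have hcast : ((∑ i ∈ Finset.range p, i) * 2 : ℕ) = (p * (p-1) : ℕ) := h2
      have := congrArg (Nat.cast : ℕ → ℤ) hcast
      push_cast at this
      rw [this, hh]; push_cast; ring
    exact mul_right_cancel₀ (by norm_num : (2:ℤ) ≠ 0) this
  refine ⟨1 + (p:ℤ)*(h*t + (∑ i ∈ Finset.range p, c i)), ?_, ?_⟩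
  · rw [hsum, hid]; ring
  · intro hdvd
    have hd1 : (p:ℤ) ∣ 1 := by
      have hd2 : (p:ℤ) ∣ (p:ℤ)*(h*t + (∑ i ∈ Finset.range p, c i)) := Dvd.intro _ rfl
      have : (1:ℤ) = (1 + (p:ℤ)*(h*t + (∑ i ∈ Finset.range p, c i))) - (p:ℤ)*(h*t + (∑ i ∈ Finset.range p, c i)) := by ring
      rw [this]
      exact dvd_sub hdvd hd2
    have := Int.le_of_dvd one_pos hd1
    have h2 := hp.two_le
    omega

private lemma nt_step {p : ℕ} (hp : p.Prime) (hodd : Odd p) {μ : ℤ} {r : ℕ}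
    (h1 : (p:ℤ) ∣ μ - 1) (h2 : (p:ℤ)^(r+1) ∣ μ^p - 1) : (p:ℤ)^r ∣ μ - 1 := by
  obtain ⟨t, ht⟩ := h1
  have hμ : μ = 1 + (p:ℤ)*t := by linarith
  obtain ⟨u, hu, hpu⟩ := nt_geom hp hodd t
  have hfac : μ^p - 1 = ((p:ℤ) * u) * (μ - 1) := by
    rw [← geom_sum_mul, hμ, hu]
  rw [hfac] at h2
  have h3 : (p:ℤ)^r ∣ u * (μ - 1) := by
    have hp0 : (p:ℤ) ≠ 0 := by exact_mod_cast hp.ne_zero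
    have e1 : (p:ℤ)^(r+1) = (p:ℤ) * (p:ℤ)^r := by ring
    have e2 : ((p:ℤ) * u) * (μ - 1) = (p:ℤ) * (u * (μ - 1)) := by ring
    rw [e1, e2] at h2
    exact (mul_dvd_mul_iff_left hp0).mp h2
  have hprime : Prime (p:ℤ) := Nat.prime_iff_prime_int.mp hp
  have hcop : IsCoprime ((p:ℤ)^r) u :=
    ((hprime.coprime_iff_not_dvd.mpr hpu).pow_left)
  exact hcop.dvd_of_dvd_mul_left h3

private lemma nt_fermat {p : ℕ} (hp : p.Prime) (i : ℤ) (j : ℕ) :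
    (p:ℤ) ∣ i^(p^j) - i := by
  haveI : Fact p.Prime := ⟨hp⟩
  rw [← ZMod.intCast_zmod_eq_zero_iff_dvd]
  push_cast
  rw [ZMod.pow_card_pow]
  ring

private lemma nt_main {p : ℕ} (hp : p.Prime) (hodd : Odd p) :
    ∀ (s : ℕ) {m : ℕ} (i : ℤ), 1 ≤ m → (p:ℤ)^(m+s) ∣ i^(p^s) - 1 → (p:ℤ)^m ∣ i - 1 := by
  intro s
  induction s with
  | zero => intro m i _ h; simpa using h
  | succ s ih =>
    intro m i hm h
    have hp1 : (p:ℤ) ∣ i - 1 := by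
      have hd1 : (p:ℤ) ∣ i^(p^(s+1)) - 1 := by
        refine dvd_trans ?_ h
        exact dvd_pow_self _ (by omega)
      have hd2 := nt_fermat hp i (s+1)
      have : i - 1 = (i^(p^(s+1)) - 1) - (i^(p^(s+1)) - i) := by ring
      rw [this]; exact dvd_sub hd1 hd2
    have hps : (p:ℤ) ∣ i^(p^s) - 1 := by
      have : (i - 1) ∣ i^(p^s) - 1 := by
        have h0 := geom_sum_mul i (p^s)
        exact ⟨_, by rw [← h0, mul_comm]⟩
      exact dvd_trans hp1 this
    have hstep : (p:ℤ)^(m+s) ∣ i^(p^s) - 1 := by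
      refine nt_step hp hodd hps ?_
      have : (i^(p^s))^p = i^(p^(s+1)) := by
        rw [← pow_mul, pow_succ]
      rw [this]
      exact h
    exact ih i hm hstep

end NT

open Subgroup

private lemma subgroup_of_zpowers_eq {G : Type*} [Group G] [Finite G] {x : G} {K : Subgroup G}
    (h : K ≤ Subgroup.zpowers x) :
    K = Subgroup.zpowers (x ^ (orderOf x / Nat.card K)) := by
  set o := orderOf x with ho
  set dK := Nat.card K with hdK
  have hdvd : dK ∣ o := by
    have := Subgroup.card_dvd_of_le h
    rwa [Nat.card_zpowers] at this
  have ho0 : o ≠ 0 := (orderOf_pos x).ne'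
  have hdK0 : dK ≠ 0 := Nat.card_pos.ne'
  set z := x ^ (o / dK) with hz
  have hoz : orderOf z = dK := by
    rw [hz, orderOf_pow, ← ho, Nat.gcd_eq_right (Nat.div_dvd_of_dvd hdvd),
      Nat.div_div_self hdvd ho0]
  have hle : K ≤ Subgroup.zpowers z := by
    intro y hy
    obtain ⟨j, hj⟩ := h hy
    simp only at hj
    have hy1 : y ^ dK = 1 := by
      have h1 : (⟨y, hy⟩ : K) ^ dK = 1 := pow_card_eq_one'
      have h2 := congrArg (Subtype.val) h1
      simpa using h2
    have hx1 : x ^ (j * (dK : ℤ)) = 1 := by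
      rw [zpow_mul, hj]
      rw [show ((dK:ℤ)) = ((dK:ℕ):ℤ) from rfl, zpow_natCast, hy1]
    have hdvd2 : (o : ℤ) ∣ j * dK := orderOf_dvd_iff_zpow_eq_one.mpr hx1
    have hoeq : (o : ℤ) = ((o / dK : ℕ) : ℤ) * (dK : ℤ) := by
      rw [← Nat.cast_mul, Nat.div_mul_cancel hdvd]
    have hdvd3 : ((o / dK : ℕ) : ℤ) ∣ j := by
      have : ((o / dK : ℕ) : ℤ) * (dK : ℤ) ∣ j * (dK : ℤ) := hoeq ▸ hdvd2
      exact (mul_dvd_mul_iff_right (by exact_mod_cast hdK0 : (dK:ℤ) ≠ 0)).mp this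
    obtain ⟨w, hw⟩ := hdvd3
    refine ⟨w, ?_⟩
    simp only
    rw [← hj, hw, zpow_mul, hz]
    norm_cast
  have hcard : Nat.card (Subgroup.zpowers z) ≤ dK := by
    rw [Nat.card_zpowers, hoz]
  exact Subgroup.eq_of_le_of_card_ge hle hcard

private lemma zpowers_engine {G : Type*} [Group G] [Finite G] (xa xb : G) (d : ℕ)
    (hd : d ∣ Nat.card (Subgroup.zpowers xa ⊓ Subgroup.zpowers xb : Subgroup G)) :
    Subgroup.zpowers (xa ^ (orderOf xa / d)) = Subgroup.zpowers (xb ^ (orderOf xb / d)) := by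
  set S : Subgroup G := Subgroup.zpowers xa ⊓ Subgroup.zpowers xb with hS
  set cS := Nat.card S with hcS
  have hcS0 : cS ≠ 0 := Nat.card_pos.ne'
  have hSa : S ≤ Subgroup.zpowers xa := inf_le_left
  have hSb : S ≤ Subgroup.zpowers xb := inf_le_right
  have hSeq : S = Subgroup.zpowers (xa ^ (orderOf xa / cS)) := subgroup_of_zpowers_eq hSa
  set z := xa ^ (orderOf xa / cS) with hz
  have hoz : orderOf z = cS := by rw [← Nat.card_zpowers, ← hSeq]
  set W : Subgroup G := Subgroup.zpowers (z ^ (cS / d)) with hW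
  have hWS : W ≤ S := by
    rw [hSeq]
    exact Subgroup.zpowers_le.mpr (pow_mem (Subgroup.mem_zpowers z) _)
  have hcW : Nat.card W = d := by
    rw [hW, Nat.card_zpowers, orderOf_pow, hoz, Nat.gcd_eq_right (Nat.div_dvd_of_dvd hd),
      Nat.div_div_self hd hcS0]
  have h1 : W = Subgroup.zpowers (xa ^ (orderOf xa / d)) := by
    have := subgroup_of_zpowers_eq (le_trans hWS hSa)
    rwa [hcW] at this
  have h2 : W = Subgroup.zpowers (xb ^ (orderOf xb / d)) := by
    have := subgroup_of_zpowers_eq (le_trans hWS hSb)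
    rwa [hcW] at this
  rw [← h1, ← h2]

open Subgroup

private lemma orderOf_conj' {G : Type*} [Group G] (g a : G) :
    orderOf (g * a * g⁻¹) = orderOf a := by
  have h := orderOf_injective (MulAut.conj g).toMonoidHom (MulAut.conj g).injective a
  simpa [MulAut.conj_apply] using h

private lemma conj_pow_mem {p : ℕ} (hp : p.Prime) {G : Type*} [Group G] [Finite G]
    (hG : IsPGroup p G) (a g : G) (C : Subgroup G)
    (hH : Subgroup.zpowers a ≤ C) (hK : Subgroup.zpowers (g * a * g⁻¹) ≤ C)
    {e : ℕ} (he : ((Subgroup.zpowers a).subgroupOf C).index = e)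
    (heo : e ∣ orderOf a) :
    g * a ^ e * g⁻¹ ∈ Subgroup.zpowers (a ^ e) := by
  haveI : Fact p.Prime := ⟨hp⟩
  set H : Subgroup G := Subgroup.zpowers a with hHdef
  set K : Subgroup G := Subgroup.zpowers (g * a * g⁻¹) with hKdef
  set o := orderOf a with hodef
  -- basic cardinalities
  obtain ⟨n, hn⟩ := IsPGroup.iff_card.mp hG
  have hcardH : Nat.card H = o := Nat.card_zpowers a
  have hcardK : Nat.card K = o := by
    rw [hKdef, Nat.card_zpowers, orderOf_conj']
  -- p-power exponents
  have hopow : ∃ k, o = p ^ k := by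
    obtain ⟨k, hk⟩ := hG a
    obtain ⟨i, _, hi⟩ := (Nat.dvd_prime_pow hp).mp (orderOf_dvd_of_pow_eq_one hk)
    exact ⟨i, hi⟩
  obtain ⟨k, hk⟩ := hopow
  have hepow : ∃ ε, e = p ^ ε := by
    obtain ⟨i, _, hi⟩ := (Nat.dvd_prime_pow hp).mp (hk ▸ heo)
    exact ⟨i, hi⟩
  obtain ⟨ε, hε⟩ := hepow
  have hεk : ε ≤ k := by
    have hdd : p ^ ε ∣ p ^ k := by rw [← hε, ← hk]; exact heo
    have hle : p ^ ε ≤ p ^ k := Nat.le_of_dvd (Nat.pow_pos (n := k) hp.pos) hdd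
    exact (Nat.pow_le_pow_iff_right hp.two_le).mp hle
  -- index bookkeeping
  have hrelH : H.relIndex C = e := he
  have hCfin : C.index ≠ 0 := Subgroup.index_ne_zero_of_finite
  have hHidx : e * C.index = H.index := by
    rw [← hrelH]; exact Subgroup.relIndex_mul_index hH
  have hKH : K.index = H.index := by
    have h1 : Nat.card K * K.index = Nat.card G := Subgroup.card_mul_index K
    have h2 : Nat.card H * H.index = Nat.card G := Subgroup.card_mul_index H
    have ho0 : o ≠ 0 := by rw [hodef]; exact (orderOf_pos a).ne'
    rw [hcardH] at h2; rw [hcardK] at h1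
    exact Nat.eq_of_mul_eq_mul_left (Nat.pos_of_ne_zero ho0) (h1.trans h2.symm)
  have hrelK : K.relIndex C = e := by
    have h1 : K.relIndex C * C.index = K.index := Subgroup.relIndex_mul_index hK
    rw [hKH, ← hHidx] at h1
    exact Nat.eq_of_mul_eq_mul_right (Nat.pos_of_ne_zero hCfin) h1
  -- the intersection
  have hinfle : H ⊓ K ≤ C := le_trans inf_le_left hH
  have hsubOf : (H ⊓ K).subgroupOf C = (H.subgroupOf C) ⊓ (K.subgroupOf C) := by
    ext x
    simp [Subgroup.mem_subgroupOf]
  have hJle : ((H ⊓ K).subgroupOf C).index ≤ e * e := by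
    rw [hsubOf]
    calc ((H.subgroupOf C) ⊓ (K.subgroupOf C)).index
        ≤ (H.subgroupOf C).index * (K.subgroupOf C).index := Subgroup.index_inf_le (H := H.subgroupOf C) (K := K.subgroupOf C)
      _ = e * e := by
          have e1 : (H.subgroupOf C).index = e := he
          have e2 : (K.subgroupOf C).index = e := hrelK
          rw [e1, e2]
  -- cards as powers of p
  have hCG : IsPGroup p C := IsPGroup.to_subgroup hG C
  obtain ⟨nC, hnC⟩ := IsPGroup.iff_card.mp hCG
  have hJdvd : ((H ⊓ K).subgroupOf C).index ∣ Nat.card C := Subgroup.index_dvd_card ((H ⊓ K).subgroupOf C)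
  obtain ⟨j, hjle, hj⟩ := (Nat.dvd_prime_pow hp).mp (hnC ▸ hJdvd)
  have hcardInf : Nat.card (H ⊓ K : Subgroup G) * p ^ j = Nat.card C := by
    have := Subgroup.card_mul_index ((H ⊓ K).subgroupOf C)
    rw [hj] at this
    rwa [Nat.card_congr (Subgroup.subgroupOfEquivOfLe hinfle).toEquiv] at this
  obtain ⟨y, hyle, hy⟩ := (Nat.dvd_prime_pow hp).mp
    (hn ▸ Subgroup.card_subgroup_dvd_card (H ⊓ K : Subgroup G))
  -- index of C
  obtain ⟨σ, hσle, hσ⟩ := (Nat.dvd_prime_pow hp).mp (hn ▸ Subgroup.index_dvd_card C)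
  have hCC : Nat.card C * C.index = Nat.card G := Subgroup.card_mul_index C
  -- exponent arithmetic
  have hp1 : 1 < p := hp.one_lt
  have hyj : y + j = nC := by
    apply Nat.pow_right_injective hp.two_le
    show p ^ (y + j) = p ^ nC
    rw [pow_add, ← hy, ← hnC, ← hcardInf]
  have hnCσ : nC + σ = n := by
    apply Nat.pow_right_injective hp.two_le
    show p ^ (nC + σ) = p ^ n
    rw [pow_add, ← hnC, ← hσ, hCC, hn]
  have hkεσ : k + (ε + σ) = n := by
    apply Nat.pow_right_injective hp.two_le
    show p ^ (k + (ε + σ)) = p ^ n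
    rw [pow_add, pow_add, ← hk, ← hε, ← hσ]
    rw [← mul_assoc]
    calc o * e * C.index = o * (e * C.index) := by ring
      _ = Nat.card H * H.index := by rw [hHidx, hcardH]
      _ = Nat.card G := Subgroup.card_mul_index H
      _ = p ^ n := hn
  have hjle2 : j ≤ ε + ε := by
    have : (p:ℕ) ^ j ≤ p ^ ε * p ^ ε := by
      rw [← hj, ← hε]; exact hJle
    rw [← pow_add] at this
    exact (Nat.pow_le_pow_iff_right hp.two_le).mp this
  -- conclude d ∣ card (H ⊓ K)
  set d := p ^ (k - ε) with hd
  have hdo : o = d * e := by rw [hd, hε, hk, ← pow_add]; congr 1; omega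
  have hddvd : d ∣ Nat.card (H ⊓ K : Subgroup G) := by
    rw [hy, hd]
    exact pow_dvd_pow p (by omega)
  have hod : o / d = e := by rw [hdo]; exact Nat.mul_div_cancel_left e (by positivity)
  -- apply the engine
  have heng := zpowers_engine a (g * a * g⁻¹) d hddvd
  rw [← hodef] at heng
  rw [orderOf_conj', ← hodef, hod] at heng
  rw [conj_pow] at heng
  rw [heng]
  exact Subgroup.mem_zpowers _

private lemma pgroup_class_le {p : ℕ} (hp : p.Prime) :
    ∀ (N : ℕ) (G : Type u) [Group G] [Finite G], Nat.card G ≤ N → IsPGroup p G →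
      ∀ (inst : Group.IsNilpotent G) (j : ℕ), Nat.card G = p ^ j →
      Group.nilpotencyClass G ≤ max (j - 1) 1 := by
  haveI : Fact p.Prime := ⟨hp⟩
  intro N
  induction N with
  | zero =>
    intro G _ _ hle _ _ _ _
    have := Nat.card_pos (α := G)
    omega
  | succ N ih =>
    intro G _ _ hle hG inst j hj
    by_cases hs : Subsingleton G
    · have h0 : Group.nilpotencyClass G = 0 := nilpotencyClass_zero_iff_subsingleton.mpr hs
      rw [h0]; omega
    haveI : Nontrivial G := not_subsingleton_iff_nontrivial.mp hs
    haveI hZnt : Nontrivial (Subgroup.center G) := hG.center_nontrivial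
    set Z := Subgroup.center G with hZ
    have hQp : IsPGroup p (G ⧸ Z) := hG.to_quotient Z
    haveI instQ : Group.IsNilpotent (G ⧸ Z) := hQp.isNilpotent
    obtain ⟨j2, hj2⟩ := IsPGroup.iff_card.mp hQp
    obtain ⟨z, hz⟩ := IsPGroup.iff_card.mp (IsPGroup.to_subgroup hG Z)
    have hmul : Nat.card G = Nat.card (G ⧸ Z) * Nat.card Z :=
      Subgroup.card_eq_card_quotient_mul_card_subgroup Z
    have hz1 : 1 ≤ z := by
      rcases Nat.eq_zero_or_pos z with h0 | h1
      · exfalso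
        have := Finite.one_lt_card (α := Z)
        rw [hz, h0, pow_zero] at this
        omega
      · exact h1
    have hsum : j2 + z = j := by
      apply Nat.pow_right_injective hp.two_le
      show p ^ (j2 + z) = p ^ j
      rw [pow_add, ← hj2, ← hz, ← hmul, hj]
    have hcardlt : Nat.card (G ⧸ Z) < Nat.card G := by
      have h1 : 1 < Nat.card Z := Finite.one_lt_card
      have h2 : 0 < Nat.card (G ⧸ Z) := Nat.card_pos
      calc Nat.card (G ⧸ Z) = Nat.card (G ⧸ Z) * 1 := (mul_one _).symm
        _ < Nat.card (G ⧸ Z) * Nat.card Z := by exact Nat.mul_lt_mul_of_le_of_lt (le_refl _) h1 h2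
        _ = Nat.card G := hmul.symm
    have hclassQ : Group.nilpotencyClass (G ⧸ Z) = Group.nilpotencyClass G - 1 :=
      nilpotencyClass_quotient_center
    have hclass1 : 1 ≤ Group.nilpotencyClass G := by
      rcases Nat.eq_zero_or_pos (Group.nilpotencyClass G) with h0 | h1
      · exact absurd (nilpotencyClass_zero_iff_subsingleton.mp h0) hs
      · exact h1
    by_cases hcyc : IsCyclic (G ⧸ Z)
    · -- G is abelian, class ≤ 1
      have hcomm : ∀ a b : G, a * b = b * a := by
        intro a b
        refine commutative_of_cyclic_center_quotient (QuotientGroup.mk' Z) ?_ a b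
        rw [QuotientGroup.ker_mk']
      have : Group.nilpotencyClass G ≤ 1 := by
        rw [← _root_.upperCentralSeries_eq_top_iff_nilpotencyClass_le, _root_.upperCentralSeries_one]
        rw [eq_top_iff]
        intro x _
        rw [Subgroup.mem_center_iff]
        intro g
        exact hcomm g x
      omega
    · -- quotient nontrivial and noncyclic
      haveI : Nontrivial (G ⧸ Z) := by
        by_contra hns
        exact hcyc (@isCyclic_of_subsingleton _ _ (not_nontrivial_iff_subsingleton.mp hns))
      have hj2ge : 2 ≤ j2 := by
        by_contra hlt
        push_neg at hlt
        interval_cases j2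
        · rw [pow_zero] at hj2
          have := Finite.one_lt_card (α := G ⧸ Z)
          omega
        · rw [pow_one] at hj2
          exact hcyc (isCyclic_of_prime_card hj2)
      have hQle : Nat.card (G ⧸ Z) ≤ N := by omega
      have hIH := ih (G ⧸ Z) hQle hQp instQ j2 hj2
      have : Group.nilpotencyClass (G ⧸ Z) ≤ j2 - 1 := by omega
      omega

private lemma core_central {p : ℕ} (hp : p.Prime) (hodd : Odd p) :
    ∀ (NB : ℕ) (G : Type u) [Group G] [Finite G], Nat.card G ≤ NB → IsPGroup p G →
      ∀ (a g : G), Commute g (a ^ (Subgroup.zpowers a).index) := by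
  haveI : Fact p.Prime := ⟨hp⟩
  intro NB
  induction NB with
  | zero =>
    intro G _ _ hle _ _ _
    have := Nat.card_pos (α := G)
    omega
  | succ NB ih =>
    intro G _ _ hle hG a g
    set H : Subgroup G := Subgroup.zpowers a with hHdef
    set F := H.index with hFdef
    set o := orderOf a with hodef
    set b := a ^ F with hbdef
    by_cases hoF : o ∣ F
    · -- b = 1
      have hb1 : b = 1 := orderOf_dvd_iff_pow_eq_one.mp hoF
      rw [hb1]
      exact Commute.one_right g
    -- now o does not divide F; get exponents
    obtain ⟨n, hn⟩ := IsPGroup.iff_card.mp hG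
    have hopow : ∃ k, o = p ^ k := by
      obtain ⟨k, hk⟩ := hG a
      obtain ⟨i, _, hi⟩ := (Nat.dvd_prime_pow hp).mp (orderOf_dvd_of_pow_eq_one hk)
      exact ⟨i, hi⟩
    obtain ⟨k, hk⟩ := hopow
    obtain ⟨f, hfle, hf⟩ := (Nat.dvd_prime_pow hp).mp (hn ▸ Subgroup.index_dvd_card H)
    rw [← hFdef] at hf
    have hfk : f < k := by
      by_contra hge
      push_neg at hge
      exact hoF (by rw [hk, hf]; exact pow_dvd_pow p hge)
    have hFo : F ∣ o := by rw [hk, hf]; exact pow_dvd_pow p hfk.le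
    have ho0 : o ≠ 0 := (orderOf_pos a).ne'
    -- order of b
    have hob : orderOf b = p ^ (k - f) := by
      rw [hbdef, orderOf_pow, ← hodef, Nat.gcd_eq_right hFo]
      rw [hk, hf]
      have : p ^ k = p ^ (k - f) * p ^ f := by rw [← pow_add]; congr 1; omega
      rw [this, Nat.mul_div_cancel _ (pow_pos hp.pos _)]
    have hm1 : 1 ≤ k - f := by omega
    -- N := zpowers b is normal
    have hNconj : ∀ g' : G, g' * b * g'⁻¹ ∈ Subgroup.zpowers b := by
      intro g'
      exact conj_pow_mem hp hG a g' ⊤ le_top le_top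
        (Subgroup.relIndex_top_right H) hFo
    have hNnormal : (Subgroup.zpowers b).Normal := by
      constructor
      intro x hx g'
      obtain ⟨i, hi⟩ := Subgroup.mem_zpowers_iff.mp hx
      rw [← hi, ← conj_zpow]
      exact zpow_mem (hNconj g') i
    -- C := centralizer of N
    set C : Subgroup G := Subgroup.centralizer (Subgroup.zpowers b : Set G) with hCdef
    have haC : a ∈ C := by
      rw [hCdef, Subgroup.mem_centralizer_iff]
      intro y hy
      obtain ⟨i, hi⟩ := Subgroup.mem_zpowers_iff.mp hy
      rw [← hi, hbdef]
      exact ((Commute.refl a).pow_left F).zpow_left i |>.eq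
    have hHC : H ≤ C := Subgroup.zpowers_le.mpr haC
    by_cases hCtop : C = ⊤
    · -- b is central
      have hg : g ∈ C := hCtop ▸ Subgroup.mem_top g
      rw [hCdef, Subgroup.mem_centralizer_iff] at hg
      exact (hg b (Subgroup.mem_zpowers b)).symm
    -- C is a proper normal subgroup
    have hCnormal : C.Normal := by
      constructor
      intro x hx g'
      rw [hCdef, Subgroup.mem_centralizer_iff]
      intro y hy
      have hy' : g'⁻¹ * y * g'⁻¹⁻¹ ∈ Subgroup.zpowers b := hNnormal.conj_mem y hy g'⁻¹
      rw [hCdef, Subgroup.mem_centralizer_iff] at hx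
      have hxy := hx _ hy'
      have expand : y = g' * (g'⁻¹ * y * g'⁻¹⁻¹) * g'⁻¹ := by group
      rw [expand]
      set y' := g'⁻¹ * y * g'⁻¹⁻¹ with hy'def
      calc g' * y' * g'⁻¹ * (g' * x * g'⁻¹)
          = g' * (y' * x) * g'⁻¹ := by group
        _ = g' * (x * y') * g'⁻¹ := by rw [← hxy]
        _ = g' * x * g'⁻¹ * (g' * y' * g'⁻¹) := by group
    haveI := hCnormal
    -- index of C
    set q := C.index with hqdef
    have hq1 : q ≠ 1 := fun h => hCtop (Subgroup.index_eq_one.mp h)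
    obtain ⟨σ, hσle, hσ⟩ := (Nat.dvd_prime_pow hp).mp (hn ▸ Subgroup.index_dvd_card C)
    have hσ1 : 1 ≤ σ := by
      rcases Nat.eq_zero_or_pos σ with h0 | h1
      · exfalso; rw [h0, pow_zero] at hσ; exact hq1 hσ
      · exact h1
    -- card C < card G
    have hq0 : q ≠ 0 := Subgroup.index_ne_zero_of_finite
    have hcardC : Nat.card C * q = Nat.card G := Subgroup.card_mul_index C
    have hcardClt : Nat.card C < Nat.card G := by
      have h2 : 2 ≤ q := by omega
      have hcpos : 0 < Nat.card C := Nat.card_pos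
      calc Nat.card C = Nat.card C * 1 := (mul_one _).symm
        _ < Nat.card C * q := by exact Nat.mul_lt_mul_of_le_of_lt (le_refl _) (by omega) hcpos
        _ = Nat.card G := hcardC
    have hcardCle : Nat.card C ≤ NB := by omega
    -- apply induction to C
    set a' : C := ⟨a, haC⟩ with ha'def
    set e := (Subgroup.zpowers a').index with hedef
    have hItoC := ih ↥C hcardCle (IsPGroup.to_subgroup hG C) a'
    have hsub : Subgroup.zpowers a' = H.subgroupOf C := by
      ext x
      simp only [Subgroup.mem_subgroupOf, hHdef, Subgroup.mem_zpowers_iff]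
      constructor
      · rintro ⟨i, rfl⟩
        exact ⟨i, by push_cast; rfl⟩
      · rintro ⟨i, hi⟩
        refine ⟨i, ?_⟩
        apply Subtype.ext
        push_cast
        exact hi
    have hMcent : ∀ x : G, x ∈ C → Commute x (a ^ e) := by
      intro x hx
      have h := hItoC ⟨x, hx⟩
      have h2 := congrArg (Subtype.val) h
      push_cast at h2
      exact h2
    -- relate e to indices
    have heC : (H.subgroupOf C).index = e := by rw [← hsub]
    have heq : e * q = F := by
      have h1 : H.relIndex C * C.index = H.index := Subgroup.relIndex_mul_index hHC
      have h2 : H.relIndex C = e := heC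
      rw [h2] at h1
      exact h1
    have heF : e ∣ F := ⟨q, heq.symm⟩
    have heo : e ∣ o := heF.trans hFo
    have heF' : e ∣ p ^ f := by rw [← hf]; exact heF
    obtain ⟨ε, hεle, hε⟩ := (Nat.dvd_prime_pow hp).mp heF' 
    have hεσf : ε + σ = f := by
      apply Nat.pow_right_injective hp.two_le
      show p ^ (ε + σ) = p ^ f
      rw [pow_add, ← hε, ← hσ, heq, hf]
    -- M := zpowers (a ^ e) is normal-ish: conjugates of a^e stay inside
    set c : G := a ^ e with hcdef
    have hMconj : ∀ g' : G, g' * c * g'⁻¹ ∈ Subgroup.zpowers c := by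
      intro g'
      refine conj_pow_mem hp hG a g' C hHC ?_ heC heo
      rw [Subgroup.zpowers_le]
      exact hCnormal.conj_mem a haC g'
    -- order of c
    have hoc : orderOf c = p ^ (k - ε) := by
      rw [hcdef, orderOf_pow, ← hodef, Nat.gcd_eq_right heo, hk, hε]
      have : p ^ k = p ^ (k - ε) * p ^ ε := by rw [← pow_add]; congr 1; omega
      rw [this, Nat.mul_div_cancel _ (pow_pos hp.pos _)]
    -- every g'^q lies in C
    have hgq : g ^ q ∈ C := by
      have h1 : ((g ^ q : G) : G ⧸ C) = ((g : G ⧸ C)) ^ q := by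
        exact (QuotientGroup.mk' C).map_pow g q
      have h2 : ((g : G ⧸ C)) ^ q = 1 := by
        have h3 : Nat.card (G ⧸ C) = q := (Subgroup.index_eq_card C).symm
        have h4 : ((g : G ⧸ C)) ^ (Nat.card (G ⧸ C)) = 1 := pow_card_eq_one'
        rw [h3] at h4
        exact h4
      exact (QuotientGroup.eq_one_iff _).mp (h1.trans h2)
    -- extract the conjugation exponent
    obtain ⟨i, hi⟩ := Subgroup.mem_zpowers_iff.mp (hMconj g)
    have hconj : ∀ j : ℕ, g ^ j * c * (g ^ j)⁻¹ = c ^ (i ^ j) := by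
      intro j
      induction j with
      | zero => simp
      | succ j ihj =>
        have h1 : g ^ (j+1) = g * g ^ j := by rw [pow_succ']
        rw [h1, mul_inv_rev]
        calc g * g ^ j * c * ((g ^ j)⁻¹ * g⁻¹)
            = g * (g ^ j * c * (g ^ j)⁻¹) * g⁻¹ := by group
          _ = g * c ^ (i ^ j) * g⁻¹ := by rw [ihj]
          _ = (g * c * g⁻¹) ^ (i ^ j) := by rw [conj_zpow]
          _ = (c ^ i) ^ (i ^ j) := by rw [hi]
          _ = c ^ (i ^ (j+1)) := by rw [← zpow_mul, ← pow_succ']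
    have hfix : c ^ ((i : ℤ) ^ q) = c := by
      rw [← hconj q]
      have := (hMcent (g ^ q) hgq).eq
      calc g ^ q * c * (g ^ q)⁻¹ = c * g ^ q * (g ^ q)⁻¹ := by rw [this]
        _ = c := by group
    have hdvd1 : ((orderOf c : ℤ)) ∣ (i ^ q - 1) := by
      rw [orderOf_dvd_iff_zpow_eq_one]
      rw [zpow_sub, hfix, zpow_one, mul_inv_cancel]
    -- number theory
    have hcast : ((orderOf c : ℤ)) = (p : ℤ) ^ ((k - f) + σ) := by
      rw [hoc]
      push_cast
      congr 1
      omega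
    have hdvd2 : (p : ℤ) ^ ((k - f) + σ) ∣ (i ^ (p ^ σ) - 1) := by
      rw [← hcast, ← hσ]
      exact_mod_cast hdvd1
    have hNT : (p : ℤ) ^ (k - f) ∣ (i - 1) := nt_main hp hodd σ i hm1 hdvd2
    -- conclude : g * b * g⁻¹ = b
    have hbc : b = c ^ (q : ℤ) := by
      rw [zpow_natCast, hcdef, ← pow_mul, heq]
    have hgbg : g * b * g⁻¹ = c ^ ((i : ℤ) * q) := by
      rw [hbc, ← conj_zpow]
      have h1 : g * c * g⁻¹ = c ^ i := hi.symm
      rw [h1, ← zpow_mul]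
    have hfinal : c ^ ((i : ℤ) * q) = c ^ (q : ℤ) := by
      have hdq : ((orderOf c : ℤ)) ∣ (i * q - q) := by
        rw [hcast]
        have hrw : (i * (q:ℤ) - q) = (q : ℤ) * (i - 1) := by ring
        rw [hrw, hqdef, hσ]
        push_cast
        rw [add_comm (k-f) σ, pow_add]
        exact mul_dvd_mul_left _ hNT
      have h2 : c ^ ((i * (q:ℤ)) - q) = 1 := orderOf_dvd_iff_zpow_eq_one.mp hdq
      rw [zpow_sub] at h2
      exact mul_inv_eq_one.mp h2
    have hres : g * b * g⁻¹ = b := by rw [hgbg, hfinal, ← hbc]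
    have h4 : g * b = b * g := by
      calc g * b = (g * b * g⁻¹) * g := by group
        _ = b * g := by rw [hres]
    exact h4

/-- **Theorem 1.** Let `p` be an odd prime and `P` a finite `p`-group of coexponent
`f(P) ≥ 1`. Then `cl(P) ≤ 2 f(P)`.  Here the coexponent `f` is characterized as the
least natural number such that `P` has a cyclic subgroup of index `p ^ f`. -/
theorem class_le_two_mul_coexponent {p : ℕ} (hp : p.Prime) (hodd : Odd p)
    {P : Type*} [Group P] [Finite P] (hP : IsPGroup p P)
    (f : ℕ) (hf : 1 ≤ f)
    (hex : ∃ H : Subgroup P, IsCyclic H ∧ H.index = p ^ f)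
    (hleast : ∀ f' : ℕ, (∃ H : Subgroup P, IsCyclic H ∧ H.index = p ^ f') → f ≤ f') :
    Group.nilpotencyClass P ≤ 2 * f := by
  haveI : Fact p.Prime := ⟨hp⟩
  haveI instP : Group.IsNilpotent P := IsPGroup.isNilpotent hP
  obtain ⟨H, hHcyc, hHidx⟩ := hex
  obtain ⟨n, hn⟩ := IsPGroup.iff_card.mp hP
  obtain ⟨gen, hgen⟩ := hHcyc.exists_generator
  set a : P := (gen : P) with hadef
  have hHz : Subgroup.zpowers a = H := by
    apply le_antisymm
    · exact Subgroup.zpowers_le.mpr gen.2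
    · intro x hx
      obtain ⟨i, hi⟩ := Subgroup.mem_zpowers_iff.mp (hgen ⟨x, hx⟩)
      refine Subgroup.mem_zpowers_iff.mpr ⟨i, ?_⟩
      have := congrArg (Subtype.val) hi
      push_cast at this
      exact this
  have hidx : (Subgroup.zpowers a).index = p ^ f := by rw [hHz]; exact hHidx
  -- order of a
  have hopow : ∃ k, orderOf a = p ^ k := by
    obtain ⟨k, hk⟩ := hP a
    obtain ⟨i, _, hi⟩ := (Nat.dvd_prime_pow hp).mp (orderOf_dvd_of_pow_eq_one hk)
    exact ⟨i, hi⟩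
  obtain ⟨k, hk⟩ := hopow
  have hkf : k + f = n := by
    apply Nat.pow_right_injective hp.two_le
    show p ^ (k + f) = p ^ n
    have h1 : Nat.card (Subgroup.zpowers a) * (Subgroup.zpowers a).index = Nat.card P :=
      Subgroup.card_mul_index _
    rw [Nat.card_zpowers, hk, hidx] at h1
    rw [pow_add, h1, hn]
  by_cases hkleqf : k ≤ f
  · -- small group case : card P = p ^ n with n ≤ 2f
    have hn2f : n ≤ 2 * f := by omega
    have := pgroup_class_le hp (Nat.card P) P le_rfl hP instP n hn
    refine le_trans this (max_le (by omega) (by omega))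
  · -- big cyclic subgroup case
    push_neg at hkleqf
    set b := a ^ (Subgroup.zpowers a).index with hbdef
    have hbcentral : ∀ x : P, Commute x b :=
      fun x => core_central hp hodd (Nat.card P) P le_rfl hP a x
    set N : Subgroup P := Subgroup.zpowers b with hNdef
    have hNcenter : N ≤ Subgroup.center P := by
      intro y hy
      rw [Subgroup.mem_center_iff]
      intro g2
      obtain ⟨i, hi⟩ := Subgroup.mem_zpowers_iff.mp hy
      rw [← hi]
      exact ((hbcentral g2).zpow_right i).eq
    have hNnormal : N.Normal := by
      constructor
      intro x hx g2
      have hxc := Subgroup.mem_center_iff.mp (hNcenter hx) g2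
      have hms : g2 * x * g2⁻¹ = x := by rw [hxc]; group
      rw [hms]; exact hx
    haveI := hNnormal
    -- order of b
    have hFo : (Subgroup.zpowers a).index ∣ orderOf a := by
      rw [hidx, hk]; exact pow_dvd_pow p hkleqf.le
    have hob : orderOf b = p ^ (k - f) := by
      rw [hbdef, orderOf_pow, Nat.gcd_eq_right hFo, hk, hidx]
      have : p ^ k = p ^ (k - f) * p ^ f := by rw [← pow_add]; congr 1; omega
      rw [this, Nat.mul_div_cancel _ (pow_pos hp.pos _)]
    -- card of quotient
    have hQp : IsPGroup p (P ⧸ N) := hP.to_quotient N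
    haveI instQ : Group.IsNilpotent (P ⧸ N) := hQp.isNilpotent
    obtain ⟨j2, hj2⟩ := IsPGroup.iff_card.mp hQp
    have hmul : Nat.card P = Nat.card (P ⧸ N) * Nat.card N :=
      Subgroup.card_eq_card_quotient_mul_card_subgroup N
    have hcardN : Nat.card N = p ^ (k - f) := by rw [hNdef, Nat.card_zpowers, hob]
    have hj2eq : j2 = 2 * f := by
      have : p ^ j2 * p ^ (k - f) = p ^ n := by rw [← hj2, ← hcardN, ← hmul, hn]
      rw [← pow_add] at this
      have h2 := Nat.pow_right_injective hp.two_le this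
      omega
    -- class of quotient
    have hclsQ := pgroup_class_le hp (Nat.card (P ⧸ N)) (P ⧸ N) le_rfl hQp instQ j2 hj2
    have hclsQ2 : Group.nilpotencyClass (P ⧸ N) ≤ 2 * f - 1 := by
      refine le_trans hclsQ (max_le (by omega) (by omega))
    -- lift to P
    have hker : (QuotientGroup.mk' N).ker ≤ Subgroup.center P := by
      rw [QuotientGroup.ker_mk']
      exact hNcenter
    have hlift := nilpotencyClass_le_of_ker_le_center (QuotientGroup.mk' N) hker
    calc Group.nilpotencyClass P ≤ Group.nilpotencyClass (P ⧸ N) + 1 := hlift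
      _ ≤ 2 * f := by omega
end

section
/- Let p be an odd prime and P a finite p-group of order p^n and coexponent f ≥ 1, with n > 2f. Let a ∈ P be an element of order p^{n−f}, set Q = ⟨a⟩ and N = Core_P(Q), define r by p^r = min{ |P| / |Q·Q^b| : b ∈ P } and define s by p^{r−s} = |P : C_P(N)|. Then s ≥ 0, and for every integer u ≥ 1 the u-fold iterated commutator subgroup [[…[N,P],P],…,P] (with u copies of P) is contained in ℧_{(n−2f)u}(N), the subgroup generated by the p^{(n−2f)u}-th powers of elements of N. -/
open Pointwise

/-- The conjugate subgroup `Q ^ b = b⁻¹ Q b`. -/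
def conjSubgroup {G : Type*} [Group G] (b : G) (Q : Subgroup G) : Subgroup G :=
  Q.map (MulAut.conj b⁻¹).toMonoidHom

/-- `℧_k(N)`, the subgroup generated by the `p ^ k`-th powers of elements of `N`. -/
def agemo (p k : ℕ) {G : Type*} [Group G] (N : Subgroup G) : Subgroup G :=
  Subgroup.closure ((fun x : G => x ^ p ^ k) '' (N : Set G))

/-- The `u`-fold iterated commutator subgroup `[[…[N,P],P],…,P]` (with `u` copies of the
whole group `P`). -/
def iteratedCommutator {G : Type*} [Group G] (N : Subgroup G) : ℕ → Subgroup G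
  | 0 => N
  | u + 1 => ⁅iteratedCommutator N u, (⊤ : Subgroup G)⁆

section aux

lemma aux_card_mul_le {G : Type*} [Group G] [Finite G] (H K : Subgroup G) :
    Nat.card H * Nat.card K ≤ Nat.card ↥((H : Set G) * (K : Set G)) * Nat.card ↥(H ⊓ K) := by
  classical
  rw [← Nat.card_prod, ← Nat.card_prod]
  have hsec : ∀ x : ↥((H : Set G) * (K : Set G)), ∃ hk : G × G,
      hk.1 ∈ H ∧ hk.2 ∈ K ∧ hk.1 * hk.2 = (x : G) := by
    intro x
    obtain ⟨h, hh, k, hk, e⟩ := Set.mem_mul.mp x.2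
    exact ⟨(h, k), hh, hk, e⟩
  choose σ hσ1 hσ2 hσ3 using hsec
  have hmem : ∀ (h : ↥H) (k : ↥K), ((h : G) * k) ∈ (H : Set G) * (K : Set G) :=
    fun h k => Set.mul_mem_mul h.2 k.2
  have hmem2 : ∀ (h : ↥H) (k : ↥K),
      (σ ⟨(h : G) * k, hmem h k⟩).1⁻¹ * (h : G) ∈ H ⊓ K := by
    intro h k
    rw [Subgroup.mem_inf]
    constructor
    · exact H.mul_mem (H.inv_mem (hσ1 _)) h.2
    · have e := hσ3 ⟨(h : G) * k, hmem h k⟩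
      have : (σ ⟨(h : G) * k, hmem h k⟩).1⁻¹ * (h : G)
          = (σ ⟨(h : G) * k, hmem h k⟩).2 * (k : G)⁻¹ := by
        rw [inv_mul_eq_iff_eq_mul, ← mul_assoc, e]
        simp
      rw [this]
      exact K.mul_mem (hσ2 _) (K.inv_mem k.2)
  have key : Function.Injective (fun z : ↥H × ↥K =>
      ((⟨(z.1 : G) * z.2, hmem z.1 z.2⟩ : ↥((H : Set G) * (K : Set G))),
       (⟨(σ ⟨(z.1 : G) * z.2, hmem z.1 z.2⟩).1⁻¹ * z.1, hmem2 z.1 z.2⟩ : ↥(H ⊓ K)))) := by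
    rintro ⟨h, k⟩ ⟨h', k'⟩ hz
    simp only [Prod.mk.injEq, Subtype.mk.injEq] at hz
    obtain ⟨h1, h2⟩ := hz
    have hh' : (h : G) = h' := by
      have : (⟨(h : G) * k, hmem h k⟩ : ↥((H : Set G) * (K : Set G)))
          = ⟨(h' : G) * k', hmem h' k'⟩ := Subtype.ext h1
      rw [this] at h2
      exact mul_left_cancel h2
    have hk' : (k : G) = k' := by
      rw [hh'] at h1
      exact mul_left_cancel h1
    exact Prod.ext (Subtype.ext hh') (Subtype.ext hk')
  exact Nat.card_le_card_of_injective _ key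

lemma aux_le_of_card_le {G : Type*} [Group G] [Finite G] {p : ℕ} (hp : p.Prime)
    (hG : IsPGroup p G) {Q H K : Subgroup G} (hQc : IsCyclic ↥Q) (hH : H ≤ Q) (hK : K ≤ Q)
    (hcard : Nat.card ↥H ≤ Nat.card ↥K) : H ≤ K := by
  classical
  haveI := Fact.mk hp
  haveI := hQc
  haveI := Fintype.ofFinite ↥Q
  obtain ⟨α, hα⟩ := (hG.to_subgroup H).exists_card_eq
  obtain ⟨β, hβ⟩ := (hG.to_subgroup K).exists_card_eq
  have hdvd : Nat.card ↥H ∣ Nat.card ↥K := by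
    rw [hα, hβ] at hcard ⊢
    exact pow_dvd_pow p ((Nat.pow_le_pow_iff_right hp.one_lt).mp hcard)
  intro x hx
  set m := Nat.card ↥K with hm
  have hm0 : 0 < m := Nat.card_pos
  have hx1 : x ^ m = 1 := by
    obtain ⟨c, hc⟩ := hdvd
    have h1 : ((⟨x, hx⟩ : ↥H) ^ Nat.card ↥H : ↥H) = 1 := pow_card_eq_one'
    have hx0 : x ^ Nat.card ↥H = 1 := by
      have h2 := congrArg (Subtype.val) h1
      simp only [SubmonoidClass.coe_pow, OneMemClass.coe_one] at h2
      exact h2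
    rw [hc, pow_mul, hx0, one_pow]
  let T : Finset ↥Q := Finset.univ.filter (fun y => y ^ m = 1)
  have hT : T.card ≤ m := by
    simpa [T] using IsCyclic.card_pow_eq_one_le (α := ↥Q) hm0
  let KQ : Finset ↥Q := Finset.univ.filter (fun y => (y : G) ∈ K)
  have hKQcard : KQ.card = m := by
    have e : {y : ↥Q // (y : G) ∈ K} ≃ ↥K :=
      { toFun := fun y => ⟨y.1.1, y.2⟩
        invFun := fun x => ⟨⟨x.1, hK x.2⟩, x.2⟩
        left_inv := fun y => rfl
        right_inv := fun x => rfl }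
    calc KQ.card = Fintype.card {y : ↥Q // (y : G) ∈ K} := (Fintype.card_subtype _).symm
      _ = Nat.card {y : ↥Q // (y : G) ∈ K} := Nat.card_eq_fintype_card.symm
      _ = m := Nat.card_congr e
  have hsub : KQ ⊆ T := by
    intro y hy
    rw [Finset.mem_filter] at hy ⊢
    refine ⟨Finset.mem_univ _, ?_⟩
    have h1 : ((⟨(y : G), hy.2⟩ : ↥K) ^ m : ↥K) = 1 := by rw [hm]; exact pow_card_eq_one'
    have h2 := congrArg (Subtype.val) h1
    simp only [SubmonoidClass.coe_pow, OneMemClass.coe_one] at h2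
    exact Subtype.ext (by simpa using h2)
  have heq : KQ = T := Finset.eq_of_subset_of_card_le hsub (le_trans hT hKQcard.ge)
  have hxT : (⟨x, hH hx⟩ : ↥Q) ∈ T := by
    rw [Finset.mem_filter]
    exact ⟨Finset.mem_univ _, Subtype.ext (by simpa using hx1)⟩
  rw [← heq, Finset.mem_filter] at hxT
  exact hxT.2

end aux

/-- **Lemma (Core), part (ii).**  With notation as in part (i), define `s` by
`p ^ (r - s) = |P : C_P(N)|`.  Then `s ≥ 0` and for every `u ≥ 1` the `u`-fold iterated
commutator `[[…[N,P],…],P]` lies in `℧_{(n-2f)u}(N)`. -/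
theorem iterated_commutator_le_agemo {p n f : ℕ} (hp : p.Prime) (hodd : Odd p)
    {P : Type*} [Group P] [Finite P] (hP : IsPGroup p P) (hcard : Nat.card P = p ^ n)
    (hf : 1 ≤ f) (hn : 2 * f < n)
    (hex : ∃ H : Subgroup P, IsCyclic H ∧ H.index = p ^ f)
    (hleast : ∀ f' : ℕ, (∃ H : Subgroup P, IsCyclic H ∧ H.index = p ^ f') → f ≤ f')
    (a : P) (ha : orderOf a = p ^ (n - f))
    (Q : Subgroup P) (hQ : Q = Subgroup.zpowers a)
    (N : Subgroup P) (hN : N = Q.normalCore)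
    (r : ℕ)
    (hr : p ^ r =
      sInf {m : ℕ | ∃ b : P,
        m = Nat.card P / Nat.card ↥((Q : Set P) * (conjSubgroup b Q : Set P))})
    (s : ℤ)
    (hs : (p : ℚ) ^ ((r : ℤ) - s) = ((Subgroup.centralizer (N : Set P)).index : ℚ)) :
    0 ≤ s ∧ ∀ u : ℕ, 1 ≤ u → iteratedCommutator N u ≤ agemo p ((n - 2 * f) * u) N := by
  classical
  haveI : Fact p.Prime := ⟨hp⟩
  have hp1 : 1 < p := hp.one_lt
  haveI : Nonempty P := ⟨1⟩
  -- basic facts about Q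
  have hcardQ : Nat.card Q = p ^ (n - f) := by rw [hQ, Nat.card_zpowers, ha]
  have hQc : IsCyclic ↥Q := by
    refine ⟨⟨⟨a, hQ ▸ Subgroup.mem_zpowers a⟩, ?_⟩⟩
    rintro ⟨x, hx⟩
    obtain ⟨i, hi⟩ := Subgroup.mem_zpowers_iff.mp (show x ∈ Subgroup.zpowers a from hQ ▸ hx)
    exact Subgroup.mem_zpowers_iff.mpr
      ⟨i, Subtype.ext (by rw [SubgroupClass.coe_zpow]; exact hi)⟩
  have hconjcard : ∀ b : P, Nat.card ↥(conjSubgroup b Q) = Nat.card ↥Q := by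
    intro b
    exact (Nat.card_congr
      (Subgroup.equivMapOfInjective Q _ (MulAut.conj b⁻¹).injective).toEquiv).symm
  have hmemconj : ∀ (b x : P), x ∈ conjSubgroup b Q ↔ b * x * b⁻¹ ∈ Q := by
    intro b x
    simp only [conjSubgroup, Subgroup.mem_map, MulEquiv.coe_toMonoidHom, MulAut.conj_apply,
      inv_inv]
    constructor
    · rintro ⟨q, hq, rfl⟩
      simpa [mul_assoc] using hq
    · intro h
      exact ⟨b * x * b⁻¹, h, by group⟩
  -- N
  have hNQ : N ≤ Q := hN ▸ Q.normalCore_le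
  haveI hNnormal : N.Normal := by rw [hN]; infer_instance
  -- minimizing intersection
  obtain ⟨b1, hb1⟩ := Finite.exists_min (fun b : P => Nat.card ↥(Q ⊓ conjSubgroup b Q))
  have hNeq : N = Q ⊓ conjSubgroup b1 Q := by
    apply le_antisymm
    · refine le_inf hNQ fun x hx => (hmemconj b1 x).mpr ?_
      rw [hN] at hx
      exact hx b1
    · have hle : ∀ b : P, Q ⊓ conjSubgroup b1 Q ≤ Q ⊓ conjSubgroup b Q := fun b =>
        aux_le_of_card_le hp hP hQc inf_le_left inf_le_left (hb1 b)
      intro x hx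
      rw [hN]
      show ∀ b : P, b * x * b⁻¹ ∈ Q
      intro b
      exact (hmemconj b x).mp (hle b hx).2
  -- nonemptiness / positivity of the product sets
  have hne : ∀ b : P, Nonempty ↥((Q : Set P) * (conjSubgroup b Q : Set P)) := fun b =>
    ⟨⟨(1 : P) * 1, Set.mul_mem_mul Q.one_mem (conjSubgroup b Q).one_mem⟩⟩
  have hpos : ∀ b : P, 0 < Nat.card ↥((Q : Set P) * (conjSubgroup b Q : Set P)) := by
    intro b
    haveI := hne b
    exact Nat.card_pos
  -- r is a lower bound
  have hrle : ∀ b : P,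
      p ^ r ≤ Nat.card P / Nat.card ↥((Q : Set P) * (conjSubgroup b Q : Set P)) :=
    fun b => hr ▸ Nat.sInf_le ⟨b, rfl⟩
  have hkey1 : p ^ r * Nat.card ↥((Q : Set P) * (conjSubgroup b1 Q : Set P)) ≤ p ^ n := by
    have := (Nat.le_div_iff_mul_le (hpos b1)).mp (hrle b1)
    rwa [hcard] at this
  -- lower bound on card N
  have hprodle := aux_card_mul_le Q (conjSubgroup b1 Q)
  rw [hconjcard b1, hcardQ, ← hNeq] at hprodle
  have hcardN_lower : p ^ (n - 2 * f + r) ≤ Nat.card ↥N := by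
    have h2 : p ^ (n - f) * p ^ (n - f) * p ^ r ≤
        (Nat.card ↥((Q : Set P) * (conjSubgroup b1 Q : Set P)) * Nat.card ↥N) * p ^ r :=
      Nat.mul_le_mul_right _ hprodle
    have h3 : (Nat.card ↥((Q : Set P) * (conjSubgroup b1 Q : Set P)) * Nat.card ↥N) * p ^ r
        ≤ p ^ n * Nat.card ↥N := by
      calc (Nat.card ↥((Q : Set P) * (conjSubgroup b1 Q : Set P)) * Nat.card ↥N) * p ^ r
          = (p ^ r * Nat.card ↥((Q : Set P) * (conjSubgroup b1 Q : Set P))) * Nat.card ↥N := by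
            ring
        _ ≤ p ^ n * Nat.card ↥N := Nat.mul_le_mul_right _ hkey1
    have h4 : p ^ n * p ^ (n - 2 * f + r) ≤ p ^ n * Nat.card ↥N := by
      have hexp : n + (n - 2 * f + r) = (n - f) + (n - f) + r := by omega
      calc p ^ n * p ^ (n - 2 * f + r) = p ^ (n + (n - 2 * f + r)) := (pow_add p _ _).symm
        _ = p ^ ((n - f) + (n - f) + r) := by rw [hexp]
        _ = p ^ (n - f) * p ^ (n - f) * p ^ r := by rw [pow_add, pow_add]
        _ ≤ p ^ n * Nat.card ↥N := le_trans h2 h3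
    exact Nat.le_of_mul_le_mul_left h4 (pow_pos (by omega : 0 < p) n)
  obtain ⟨k, hk⟩ := (hP.to_subgroup N).exists_card_eq
  have hkge : n - 2 * f + r ≤ k :=
    (Nat.pow_le_pow_iff_right hp1).mp (hk ▸ hcardN_lower)
  -- centralizer
  set C := Subgroup.centralizer (N : Set P) with hC
  have hcommQ : ∀ x ∈ Q, ∀ y ∈ Q, x * y = y * x := by
    rw [hQ]
    rintro x hx y hy
    obtain ⟨i, rfl⟩ := Subgroup.mem_zpowers_iff.mp hx
    obtain ⟨j, rfl⟩ := Subgroup.mem_zpowers_iff.mp hy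
    rw [← zpow_add, ← zpow_add, add_comm]
  have hQC : Q ≤ C := fun x hx =>
    Subgroup.mem_centralizer_iff.mpr fun y hy => hcommQ y (hNQ hy) x hx
  have hQbC : ∀ b : P, conjSubgroup b Q ≤ C := by
    intro b x hx
    rw [hC, Subgroup.mem_centralizer_iff]
    intro y hy
    have hyb : b * y * b⁻¹ ∈ N := hNnormal.conj_mem y hy b
    have hq : b * x * b⁻¹ ∈ Q := (hmemconj b x).mp hx
    have hcm := hcommQ _ hq _ (hNQ hyb)
    have h2 := congrArg (fun z => b⁻¹ * z * b) hcm
    simp only [mul_assoc, inv_mul_cancel_left, mul_inv_cancel_left, inv_mul_cancel,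
      mul_inv_cancel, mul_one] at h2
    simpa [mul_assoc] using h2.symm
  -- index of centralizer is at most p^r
  obtain ⟨b0, hb0⟩ := Finite.exists_min
    (fun b : P => Nat.card P / Nat.card ↥((Q : Set P) * (conjSubgroup b Q : Set P)))
  have hrval : p ^ r
      = Nat.card P / Nat.card ↥((Q : Set P) * (conjSubgroup b0 Q : Set P)) := by
    refine le_antisymm (hrle b0) ?_
    rw [hr]
    refine le_csInf ⟨_, ⟨b0, rfl⟩⟩ ?_
    rintro m ⟨b, rfl⟩
    exact hb0 b
  have hCpos : 0 < Nat.card ↥C := Nat.card_pos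
  have hM0C : Nat.card ↥((Q : Set P) * (conjSubgroup b0 Q : Set P)) ≤ Nat.card ↥C := by
    have hsubset : (Q : Set P) * (conjSubgroup b0 Q : Set P) ⊆ (C : Set P) := by
      rintro z ⟨x, hx, y, hy, rfl⟩
      exact C.mul_mem (hQC hx) (hQbC b0 hy)
    simpa using Nat.card_mono (Set.toFinite _) hsubset
  have hCi : C.index = Nat.card P / Nat.card ↥C :=
    (Nat.div_eq_of_eq_mul_right hCpos (Subgroup.card_mul_index C).symm).symm
  have hCindex_le : C.index ≤ p ^ r := by
    rw [hCi, hrval]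
    exact Nat.div_le_div_left hM0C (hpos b0)
  -- conclusion, part 1
  have hs0 : 0 ≤ s := by
    have hle : ((Subgroup.centralizer (N : Set P)).index : ℚ) ≤ (p : ℚ) ^ (r : ℤ) := by
      rw [zpow_natCast]
      exact_mod_cast hCindex_le
    rw [← hs] at hle
    have hp1Q : (1 : ℚ) < p := by exact_mod_cast hp1
    have := (zpow_le_zpow_iff_right₀ hp1Q).mp hle
    omega
  refine ⟨hs0, ?_⟩
  -- generator of N
  haveI := hQc
  haveI : IsCyclic ↥N := Subgroup.isCyclic_of_le hNQ
  obtain ⟨x0g, hx0g⟩ := IsCyclic.exists_generator (α := ↥N)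
  set x0 : P := (x0g : P) with hx0def
  have hx0N : x0 ∈ N := x0g.2
  have hNz : N = Subgroup.zpowers x0 := by
    apply le_antisymm
    · intro y hy
      obtain ⟨i, hi⟩ := Subgroup.mem_zpowers_iff.mp (hx0g ⟨y, hy⟩)
      refine Subgroup.mem_zpowers_iff.mpr ⟨i, ?_⟩
      have := congrArg (Subtype.val) hi
      rwa [SubgroupClass.coe_zpow] at this
    · exact Subgroup.zpowers_le.mpr hx0N
  have hordx0 : orderOf x0 = p ^ k := by rw [← Nat.card_zpowers, ← hNz, hk]
  -- centralizer is normal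
  haveI hCnormal : C.Normal := by
    refine ⟨fun c hc g => ?_⟩
    rw [hC, Subgroup.mem_centralizer_iff]
    intro y hy
    have hy' : g⁻¹ * y * g ∈ N := by
      have := hNnormal.conj_mem y hy g⁻¹
      rwa [inv_inv] at this
    have h1 := Subgroup.mem_centralizer_iff.mp hc _ hy'
    have h2 := congrArg (fun z => g * z * g⁻¹) h1
    simp only [mul_assoc, inv_mul_cancel_left, mul_inv_cancel_left, inv_mul_cancel,
      mul_inv_cancel, mul_one] at h2
    simpa [mul_assoc] using h2
  -- g ^ p ^ r centralizes N
  have hgC : ∀ g : P, g ^ p ^ r ∈ C := by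
    intro g
    have hidvd : C.index ∣ p ^ n := by
      refine ⟨Nat.card ↥C, ?_⟩
      rw [← hcard, ← Subgroup.card_mul_index C, mul_comm]
    obtain ⟨j, hjn, hj⟩ := (Nat.dvd_prime_pow hp).mp hidvd
    have hjr : j ≤ r := by
      have : p ^ j ≤ p ^ r := hj ▸ hCindex_le
      exact (Nat.pow_le_pow_iff_right hp1).mp this
    have h0 := Subgroup.pow_index_mem C g
    rw [hj] at h0
    have : p ^ r = p ^ j * p ^ (r - j) := by
      rw [← pow_add]
      congr 1
      omega
    rw [this, pow_mul]
    exact pow_mem h0 _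
  -- the key divisibility for each g
  have hkey : ∀ g : P, ∃ t : ℤ, g * x0 * g⁻¹ = x0 ^ t ∧ (p : ℤ) ^ (n - 2 * f) ∣ t - 1 := by
    intro g
    obtain ⟨t, ht⟩ := Subgroup.mem_zpowers_iff.mp
      (show g * x0 * g⁻¹ ∈ Subgroup.zpowers x0 from hNz ▸ hNnormal.conj_mem x0 hx0N g)
    refine ⟨t, ht.symm, ?_⟩
    have hiter : ∀ j : ℕ, g ^ j * x0 * (g ^ j)⁻¹ = x0 ^ (t ^ j) := by
      intro j
      induction j with
      | zero => simp
      | succ j ih =>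
        calc g ^ (j + 1) * x0 * (g ^ (j + 1))⁻¹
            = g ^ j * (g * x0 * g⁻¹) * (g ^ j)⁻¹ := by
              rw [pow_succ, mul_inv_rev]
              group
          _ = g ^ j * x0 ^ t * (g ^ j)⁻¹ := by rw [← ht]
          _ = (g ^ j * x0 * (g ^ j)⁻¹) ^ t := by rw [conj_zpow]
          _ = (x0 ^ (t ^ j : ℤ)) ^ t := by rw [ih]
          _ = x0 ^ (t ^ (j + 1)) := by rw [← zpow_mul, pow_succ]
    have hfix : x0 ^ (t ^ (p ^ r)) = x0 := by
      rw [← hiter (p ^ r)]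
      have hcm := Subgroup.mem_centralizer_iff.mp (hgC g) x0 hx0N
      rw [← hcm, mul_inv_cancel_right]
    have hdvd1 : (p : ℤ) ^ k ∣ t ^ (p ^ r) - 1 := by
      have h1 : x0 ^ (t ^ (p ^ r) - 1) = 1 := by
        rw [zpow_sub, hfix, zpow_one, mul_inv_cancel]
      have h2 := orderOf_dvd_iff_zpow_eq_one.mpr h1
      rw [hordx0] at h2
      exact_mod_cast h2
    have hk1 : 1 ≤ k := by omega
    have hdvdp : (p : ℤ) ∣ t ^ (p ^ r) - 1 :=
      dvd_trans (by simpa using pow_dvd_pow (p : ℤ) hk1) hdvd1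
    have htZ : ((t : ZMod p)) = 1 := by
      have h1 : ((t : ZMod p)) ^ (p ^ r) = 1 := by
        have h0 : (((t ^ (p ^ r) - 1 : ℤ)) : ZMod p) = 0 :=
          (ZMod.intCast_zmod_eq_zero_iff_dvd _ p).mpr hdvdp
        push_cast at h0
        exact sub_eq_zero.mp h0
      have hfermat : ∀ (m : ℕ) (x : ZMod p), x ^ (p ^ m) = x := by
        intro m
        induction m with
        | zero => simp
        | succ m ih => intro x; rw [pow_succ, pow_mul, ih, ZMod.pow_card]
      rwa [hfermat r] at h1
    have hdvd_t1 : (p : ℤ) ∣ t - 1 := by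
      have h0 : (((t - 1 : ℤ)) : ZMod p) = 0 := by
        push_cast
        rw [htZ, sub_self]
      exact (ZMod.intCast_zmod_eq_zero_iff_dvd _ p).mp h0
    have hnotp : ¬ (p : ℤ) ∣ t := by
      intro h
      have h1 : (p : ℤ) ∣ 1 := by
        have := dvd_sub h hdvd_t1
        simpa using this
      have := Int.le_of_dvd one_pos h1
      have : (2 : ℤ) ≤ p := by exact_mod_cast hp.two_le
      omega
    have hlte := Int.emultiplicity_pow_sub_pow hp hodd
      (x := t) (y := 1) (by simpa using hdvd_t1) hnotp (p ^ r)
    rw [one_pow] at hlte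
    have h2 : (k : ℕ∞) ≤ emultiplicity ((p : ℤ)) (t ^ (p ^ r) - 1) :=
      le_emultiplicity_of_pow_dvd hdvd1
    rw [hlte, emultiplicity_pow_self_of_prime hp.prime r] at h2
    have h3 : ((k - r : ℕ) : ℕ∞) ≤ emultiplicity ((p : ℤ)) (t - 1) := by
      have hsum : ((k - r : ℕ) : ℕ∞) + (r : ℕ∞) = (k : ℕ∞) := by
        rw [← Nat.cast_add]
        congr 1
        omega
      refine (ENat.add_le_add_iff_right (by simp : ((r : ℕ) : ℕ∞) ≠ ⊤)).mp ?_
      rw [hsum]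
      exact h2
    have h4 : (p : ℤ) ^ (k - r) ∣ t - 1 := pow_dvd_of_le_emultiplicity h3
    exact dvd_trans (pow_dvd_pow _ (by omega : n - 2 * f ≤ k - r)) h4
  -- description of agemo
  have hagemo : ∀ j : ℕ, agemo p j N = Subgroup.zpowers (x0 ^ p ^ j) := by
    intro j
    apply le_antisymm
    · rw [agemo, Subgroup.closure_le]
      rintro z ⟨y, hy, rfl⟩
      obtain ⟨i, hi⟩ := Subgroup.mem_zpowers_iff.mp
        (show y ∈ Subgroup.zpowers x0 from hNz ▸ hy)
      refine Subgroup.mem_zpowers_iff.mpr ⟨i, ?_⟩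
      show (x0 ^ p ^ j) ^ i = y ^ p ^ j
      rw [← hi, ← zpow_natCast x0 (p ^ j), ← zpow_mul, ← zpow_natCast (x0 ^ i) (p ^ j),
        ← zpow_mul, mul_comm]
    · rw [Subgroup.zpowers_le]
      exact Subgroup.subset_closure ⟨x0, hx0N, rfl⟩
  -- main induction
  have main : ∀ u : ℕ, iteratedCommutator N u ≤ agemo p ((n - 2 * f) * u) N := by
    intro u
    induction u with
    | zero =>
      show N ≤ agemo p ((n - 2 * f) * 0) N
      intro x hx
      apply Subgroup.subset_closure
      exact ⟨x, hx, by simp⟩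
    | succ u ih =>
      show ⁅iteratedCommutator N u, (⊤ : Subgroup P)⁆ ≤ _
      refine le_trans (Subgroup.commutator_mono ih le_rfl) ?_
      rw [Subgroup.commutator_le]
      intro x hx g _
      rw [hagemo] at hx
      obtain ⟨i, hi⟩ := Subgroup.mem_zpowers_iff.mp hx
      obtain ⟨t, hgt, c, hc⟩ := hkey g
      rw [hagemo]
      refine Subgroup.mem_zpowers_iff.mpr ⟨i * (-c), ?_⟩
      have hx0i : x = x0 ^ (((p ^ ((n - 2 * f) * u) : ℕ) : ℤ) * i) := by
        rw [← hi, ← zpow_natCast x0 (p ^ ((n - 2 * f) * u)), ← zpow_mul]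
      have hconj : g * x⁻¹ * g⁻¹
          = x0 ^ (t * (-(((p ^ ((n - 2 * f) * u) : ℕ) : ℤ) * i))) := by
        rw [hx0i, ← zpow_neg, ← conj_zpow, hgt, ← zpow_mul]
      open scoped commutatorElement in
      have hcomm : ⁅x, g⁆ = x * (g * x⁻¹ * g⁻¹) := by
        rw [commutatorElement_def]
        group
      rw [hcomm, hconj, hx0i, ← zpow_add, ← zpow_natCast x0 (p ^ ((n - 2 * f) * (u + 1))),
        ← zpow_mul]
      congr 1
      have hpow : ((p : ℤ) ^ ((n - 2 * f) * (u + 1)))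
          = (p : ℤ) ^ ((n - 2 * f) * u) * (p : ℤ) ^ (n - 2 * f) := by
        rw [mul_add, mul_one, pow_add]
      push_cast
      rw [hpow]
      linear_combination ((p : ℤ) ^ ((n - 2 * f) * u) * i) * hc
  exact fun u _ => main u
end

section
/- No finite group is the product of two proper conjugate cyclic subgroups: if G is a finite group, Q is a cyclic subgroup of G, and b ∈ G is such that every element of G can be written as a product xy with x ∈ Q and y ∈ Q^b, then Q = G. -/
/-- No finite group is the product of two proper conjugate cyclic subgroups: if `Q` is a
cyclic subgroup of a finite group `G`, `b ∈ G`, and every element of `G` is a product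
`x * y` with `x ∈ Q` and `y ∈ Q ^ b`, then `Q = G`. -/
theorem eq_top_of_mul_conj_eq {G : Type*} [Group G] [Finite G]
    (Q : Subgroup G) (hQ : IsCyclic Q) (b : G)
    (h : ∀ g : G, ∃ x ∈ Q, ∃ y ∈ conjSubgroup b Q, g = x * y) :
    Q = ⊤ := by
  obtain ⟨x, hx, y, hy, hb⟩ := h b
  obtain ⟨q, hq, hqy⟩ := hy
  simp only [MulEquiv.coe_toMonoidHom, MulAut.conj_apply, inv_inv] at hqy
  -- hqy : b⁻¹ * q * b = y
  have h1 : (x * y)⁻¹ * q * (x * y) = y := by rw [← hb]; exact hqy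
  have h2 : q * (x * y) = (x * y) * y := by
    have := congrArg (fun t => (x * y) * t) h1
    simpa [mul_assoc] using this
  have h3 : q * x = x * y := by
    apply mul_right_cancel (b := y)
    simpa [mul_assoc] using h2
  have hyQ : y ∈ Q := by
    have : y = x⁻¹ * (q * x) := by rw [h3]; simp
    rw [this]
    exact Q.mul_mem (Q.inv_mem hx) (Q.mul_mem hq hx)
  -- now every element of the conjugate is in Q, so Q = ⊤
  rw [eq_top_iff]
  intro g _
  obtain ⟨u, hu, v, hv, hg⟩ := h g
  obtain ⟨r, hr, hrv⟩ := hv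
  simp only [MulEquiv.coe_toMonoidHom, MulAut.conj_apply, inv_inv] at hrv
  have hvQ : v ∈ Q := by
    have : v = y⁻¹ * (x⁻¹ * r * x) * y := by
      rw [← hrv, hb]; group
    rw [this]
    exact Q.mul_mem (Q.mul_mem (Q.inv_mem hyQ)
      (Q.mul_mem (Q.mul_mem (Q.inv_mem hx) hr) hx)) hyQ
  rw [hg]
  exact Q.mul_mem hu hvQ
end

section
/- Let P be a finite p-group and Q a cyclic subgroup of P. Then there exists an element c ∈ P such that Core_P(Q) = Q ∩ Q^c; moreover, for every b ∈ P one has Q ∩ Q^b ⊇ Q ∩ Q^c, so |Q : Core_P(Q)| = max{ |Q : Q ∩ Q^b| : b ∈ P }. -/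
/-- In a finite cyclic group, a subgroup whose cardinality divides that of another subgroup
is contained in it. -/
lemma le_of_card_dvd_card {G : Type*} [Group G] [Finite G] [IsCyclic G]
    {H K : Subgroup G} (h : Nat.card H ∣ Nat.card K) : H ≤ K := by
  classical
  cases nonempty_fintype G
  intro x hx
  have pow_card : ∀ {L : Subgroup G} {y : G}, y ∈ L → y ^ Nat.card L = 1 := fun {L y} hy =>
    by simpa only [SubgroupClass.coe_pow, OneMemClass.coe_one] using
      congrArg Subtype.val (pow_card_eq_one' (x := (⟨y, hy⟩ : L)))
  have hm : x ^ Nat.card K = 1 := by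
    obtain ⟨d, hd⟩ := h
    rw [hd, pow_mul, pow_card hx, one_pow]
  have hm0 : 0 < Nat.card K := Nat.card_pos
  have hle : (Finset.univ.filter fun a : G => a ^ Nat.card K = 1).card ≤ Nat.card K :=
    IsCyclic.card_pow_eq_one_le hm0
  have hsub : (K : Set G).toFinset ⊆ Finset.univ.filter fun a : G => a ^ Nat.card K = 1 := by
    intro y hy
    simp only [Set.mem_toFinset, SetLike.mem_coe] at hy
    simp only [Finset.mem_filter, Finset.mem_univ, true_and]
    exact pow_card hy
  have hcard : Nat.card K ≤ (K : Set G).toFinset.card := by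
    simp [Set.toFinset_card, Nat.card_eq_fintype_card]
  have heq : (K : Set G).toFinset = Finset.univ.filter fun a : G => a ^ Nat.card K = 1 :=
    Finset.eq_of_subset_of_card_le hsub (hle.trans hcard)
  have : x ∈ (K : Set G).toFinset := by
    rw [heq]; exact Finset.mem_filter.mpr ⟨Finset.mem_univ x, hm⟩
  simpa using this

/-- Let `P` be a finite `p`-group and `Q` a cyclic subgroup of `P`.  Then there is `c ∈ P`
with `Core_P(Q) = Q ⊓ Q ^ c`, and `Q ⊓ Q ^ c ≤ Q ⊓ Q ^ b` for all `b ∈ P`; consequently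
`|Q : Core_P(Q)|` is the maximum of the indices `|Q : Q ⊓ Q ^ b|` over `b ∈ P`. -/
theorem normalCore_eq_inf_conj {p : ℕ} (hp : p.Prime)
    {P : Type*} [Group P] [Finite P] (hP : IsPGroup p P)
    (Q : Subgroup P) (hQ : IsCyclic Q) :
    ∃ c : P, Q.normalCore = Q ⊓ conjSubgroup c Q ∧
      (∀ b : P, Q ⊓ conjSubgroup c Q ≤ Q ⊓ conjSubgroup b Q) ∧
      IsGreatest {m : ℕ | ∃ b : P, m = (conjSubgroup b Q).relIndex Q}
        (Q.normalCore.relIndex Q) := by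
  classical
  -- membership in the conjugate subgroup
  have mem_conj : ∀ (b x : P), x ∈ conjSubgroup b Q ↔ b * x * b⁻¹ ∈ Q := by
    intro b x
    constructor
    · rintro ⟨q, hq, rfl⟩
      simpa [MulAut.conj_apply, mul_assoc] using hq
    · intro h
      exact ⟨b * x * b⁻¹, h, by simp [MulAut.conj_apply]; group⟩
  set S : P → Subgroup P := fun b => Q ⊓ conjSubgroup b Q with hS
  have core_iff : ∀ x : P, x ∈ Q.normalCore ↔ ∀ b, x ∈ S b := by
    intro x
    constructor
    · intro hx b
      exact ⟨by simpa using hx 1, (mem_conj b x).mpr (hx b)⟩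
    · intro hx b
      exact (mem_conj b x).mp (hx b).2
  have hSQ : ∀ b, S b ≤ Q := fun b => inf_le_left
  -- comparability
  have hcomp : ∀ a b : P, Nat.card (S a) ≤ Nat.card (S b) → S a ≤ S b := by
    intro a b hab
    haveI : IsCyclic Q := hQ
    haveI : Fact p.Prime := ⟨hp⟩
    obtain ⟨i, hi⟩ := (hP.to_subgroup (S a)).exists_card_eq
    obtain ⟨j, hj⟩ := (hP.to_subgroup (S b)).exists_card_eq
    have hdvd : Nat.card ((S a).subgroupOf Q) ∣ Nat.card ((S b).subgroupOf Q) := by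
      rw [Nat.card_congr (Subgroup.subgroupOfEquivOfLe (hSQ a)).toEquiv,
        Nat.card_congr (Subgroup.subgroupOfEquivOfLe (hSQ b)).toEquiv, hi, hj]
      rw [hi, hj] at hab
      exact pow_dvd_pow p <| (Nat.pow_le_pow_iff_right hp.one_lt).mp hab
    have hle := le_of_card_dvd_card hdvd
    intro x hx
    have hxQ : x ∈ Q := hSQ a hx
    have : (⟨x, hxQ⟩ : Q) ∈ (S b).subgroupOf Q :=
      hle (Subgroup.mem_subgroupOf.mpr hx)
    exact Subgroup.mem_subgroupOf.mp this
  -- choose minimizing c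
  have hne : (Set.range fun b => Nat.card (S b)).Nonempty := ⟨_, ⟨1, rfl⟩⟩
  obtain ⟨c, hc⟩ := Nat.sInf_mem hne
  have hc' : Nat.card (S c) = sInf (Set.range fun b => Nat.card (S b)) := hc
  have hmin : ∀ b : P, S c ≤ S b := fun b =>
    hcomp c b (by rw [hc']; exact Nat.sInf_le ⟨b, rfl⟩)
  have hcore : Q.normalCore = S c := by
    ext x
    rw [core_iff]
    exact ⟨fun h => h c, fun h b => hmin b h⟩
  refine ⟨c, hcore, hmin, ?_, ?_⟩
  · refine ⟨c, ?_⟩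
    rw [hcore]
    show (Q ⊓ conjSubgroup c Q).relIndex Q = (conjSubgroup c Q).relIndex Q
    exact Subgroup.inf_relIndex_left _ _
  · rintro m ⟨b, rfl⟩
    have h1 : Q.normalCore ≤ conjSubgroup b Q :=
      (hcore ▸ (hmin b)).trans inf_le_right
    have h2 : Q.normalCore.relIndex Q ≠ 0 :=
      Subgroup.index_ne_zero_of_finite
    exact Subgroup.relIndex_le_of_le_left h1 h2
end
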